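/- Let Y be a nonempty finite type and let f, g : Y → ℝ be two score functions with |f(y) − g(y)| ≤ ε for every y ∈ Y, where ε ≥ 0. Let p_f and p_g be the associated softmax distributions, p_f(y) = exp(f(y)) / ∑_{y'} exp(f(y')) and p_g(y) = exp(g(y)) / ∑_{y'} exp(g(y')). Then the cross-entropy of p_g relative to p_f is bounded by the Shannon entropy of p_f plus 2ε: −∑_{y ∈ Y} p_f(y) · log p_g(y) ≤ H(p_f) + 2ε, where H(p_f) = −∑_{y ∈ Y} p_f(y) · log p_f(y). -/

import Mathlib

/-!
Since `log p_f(y) = f y - log ∑ exp ∘ f` and log-sum-exp is `1`-Lipschitz for the sup norm,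
`log p_f(y) - log p_g(y) ≤ 2ε` pointwise. Averaging this against `p_f` bounds the
Kullback–Leibler divergence, i.e. cross-entropy minus entropy, by `2ε`.
-/

open Finset

/-- The softmax distribution associated to a score function `f : Y → ℝ`. -/
noncomputable def softmax {Y : Type*} [Fintype Y] (f : Y → ℝ) (y : Y) : ℝ :=
  Real.exp (f y) / ∑ y' : Y, Real.exp (f y')

section Softmax

variable {Y : Type*} [Fintype Y]

lemma sum_exp_pos [Nonempty Y] (f : Y → ℝ) : 0 < ∑ y, Real.exp (f y) :=
  sum_pos (fun y _ => Real.exp_pos (f y)) univ_nonempty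

lemma softmax_nonneg (f : Y → ℝ) (y : Y) : 0 ≤ softmax f y :=
  div_nonneg (Real.exp_pos _).le (sum_nonneg fun y' _ => (Real.exp_pos (f y')).le)

lemma sum_softmax [Nonempty Y] (f : Y → ℝ) : ∑ y, softmax f y = 1 := by
  simp only [softmax, ← sum_div]
  exact div_self (sum_exp_pos f).ne'

lemma log_softmax [Nonempty Y] (f : Y → ℝ) (y : Y) :
    Real.log (softmax f y) = f y - Real.log (∑ y', Real.exp (f y')) := by
  rw [softmax, Real.log_div (Real.exp_ne_zero _) (sum_exp_pos f).ne', Real.log_exp]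

lemma log_sum_exp_le_log_sum_exp_add [Nonempty Y] {f g : Y → ℝ} {ε : ℝ}
    (h : ∀ y, f y ≤ g y + ε) :
    Real.log (∑ y, Real.exp (f y)) ≤ Real.log (∑ y, Real.exp (g y)) + ε := by
  have hle : ∑ y, Real.exp (f y) ≤ Real.exp ε * ∑ y, Real.exp (g y) := by
    rw [mul_sum]
    gcongr with y
    rw [← Real.exp_add, Real.exp_le_exp]
    linarith [h y]
  calc Real.log (∑ y, Real.exp (f y))
      ≤ Real.log (Real.exp ε * ∑ y, Real.exp (g y)) := Real.log_le_log (sum_exp_pos f) hle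
    _ = Real.log (∑ y, Real.exp (g y)) + ε := by
      rw [Real.log_mul (Real.exp_ne_zero _) (sum_exp_pos g).ne', Real.log_exp, add_comm]

lemma log_softmax_sub_log_softmax_le [Nonempty Y] {f g : Y → ℝ} {ε : ℝ}
    (h : ∀ y, |f y - g y| ≤ ε) (y : Y) :
    Real.log (softmax f y) - Real.log (softmax g y) ≤ 2 * ε := by
  have hnorm := log_sum_exp_le_log_sum_exp_add (f := g) (g := f) (ε := ε)
    fun y' => by linarith [(abs_le.mp (h y')).1]
  rw [log_softmax, log_softmax]
  linarith [(abs_le.mp (h y)).2]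

end Softmax

theorem crossEntropy_le_entropy_add_two_eps_general {Y : Type*} [Fintype Y] [Nonempty Y]
    (f g : Y → ℝ) (ε : ℝ) (h : ∀ y : Y, |f y - g y| ≤ ε) :
    -∑ y : Y, softmax f y * Real.log (softmax g y) ≤
      (-∑ y : Y, softmax f y * Real.log (softmax f y)) + 2 * ε := by
  have hkl : ∑ y, softmax f y * (Real.log (softmax f y) - Real.log (softmax g y)) ≤ 2 * ε :=
    calc ∑ y, softmax f y * (Real.log (softmax f y) - Real.log (softmax g y))
        ≤ ∑ y, softmax f y * (2 * ε) := by
          gcongr with y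
          · exact softmax_nonneg f y
          · exact log_softmax_sub_log_softmax_le h y
      _ = 2 * ε := by rw [← sum_mul, sum_softmax, one_mul]
  simp only [mul_sub, sum_sub_distrib] at hkl
  linarith

/-- If two score functions `f, g` satisfy `|f y - g y| ≤ ε` for all `y`, then the
cross-entropy of the softmax of `g` relative to the softmax of `f` is bounded by the
Shannon entropy of the softmax of `f` plus `2 ε`. -/
theorem crossEntropy_le_entropy_add_two_eps {Y : Type*} [Fintype Y] [Nonempty Y]
    (f g : Y → ℝ) (ε : ℝ) (hε : 0 ≤ ε) (h : ∀ y : Y, |f y - g y| ≤ ε) :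
    -∑ y : Y, softmax f y * Real.log (softmax g y) ≤
      (-∑ y : Y, softmax f y * Real.log (softmax f y)) + 2 * ε :=
  crossEntropy_le_entropy_add_two_eps_general f g ε h
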